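/- arXiv:2403.19883 — 5 statements merged into one kernel-verified Lean document; each statement's English description precedes it below -/
import Mathlib

section
/- If a policy π is proper (every state in its domain reaches a frontier state via π-trajectories), then every sub-policy π' ⊆ π (a restriction of π to a subset of its domain) is also proper. -/
/-- The domain of a policy (partial function from states to actions). -/
def pdom {S A : Type*} (π : S → Option A) : Set S := {s | π s ≠ none}

/-- One π-transition step: from `s` take the action `π s` prescribes, landing in a successor. -/
def pstep {S A : Type*} (succs : S → A → Set S) (π : S → Option A) (s s' : S) : Prop :=
  ∃ a, π s = some a ∧ s' ∈ succs s a

/-- `reachFrom succs π s` : states reachable from `s` by π-trajectories (including `s`). -/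
def reachFrom {S A : Type*} (succs : S → A → Set S) (π : S → Option A) (s : S) : Set S :=
  {s' | Relation.ReflTransGen (pstep succs π) s s'}

/-- `reachAll succs π` : states reachable from some domain state of `π`. -/
def reachAll {S A : Type*} (succs : S → A → Set S) (π : S → Option A) : Set S :=
  ⋃ s ∈ pdom π, reachFrom succs π s

/-- Frontier of a policy: reachable but unmapped states. -/
def front {S A : Type*} (succs : S → A → Set S) (π : S → Option A) : Set S :=
  reachAll succs π \ pdom π

/-- `escape succs π s` : frontier states π-reachable from `s`. -/
def escape {S A : Type*} (succs : S → A → Set S) (π : S → Option A) (s : S) : Set S :=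
  reachFrom succs π s ∩ front succs π

/-- A policy is proper iff every domain state reaches a frontier state. -/
def proper {S A : Type*} (succs : S → A → Set S) (π : S → Option A) : Prop :=
  ∀ s ∈ pdom π, (escape succs π s).Nonempty

/-- `π'` is a sub-policy of `π` : restriction of `π` to a subset of its domain. -/
def subpolicy {S A : Type*} (π' π : S → Option A) : Prop :=
  ∀ s a, π' s = some a → π s = some a

/-- Goal-closed: every frontier state is a goal state. -/
def goalClosed {S A : Type*} (succs : S → A → Set S) (Sg : Set S) (π : S → Option A) : Prop :=
  front succs π ⊆ Sg

/-- `remain(π) = (front(π) \ S*) ∪ ({s₀} \ (S* ∪ domain(π)))`. -/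
def remainSet {S A : Type*} (succs : S → A → Set S) (Sg : Set S) (s0 : S)
    (π : S → Option A) : Set S :=
  (front succs π \ Sg) ∪ ({s0} \ (Sg ∪ pdom π))

/-- A solution: a strong-cyclic (goal-closed and proper) policy covering the initial state. -/
def isSolution {S A : Type*} (succs : S → A → Set S) (Sg : Set S) (s0 : S)
    (π : S → Option A) : Prop :=
  goalClosed succs Sg π ∧ proper succs π ∧ s0 ∈ Sg ∪ pdom π

/-- If a policy is proper, every sub-policy of it is proper. -/
theorem subpolicy_proper {S A : Type*} (succs : S → A → Set S) (π π' : S → Option A)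
    (hπ : proper succs π) (hsub : subpolicy π' π) : proper succs π' := by
  have key : ∀ s t : S, Relation.ReflTransGen (pstep succs π) s t → t ∉ pdom π' →
      ∃ u, Relation.ReflTransGen (pstep succs π') s u ∧ u ∉ pdom π' := by
    intro s t h ht
    induction h using Relation.ReflTransGen.head_induction_on with
    | refl => exact ⟨t, .refl, ht⟩
    | head hstep _ ih =>
      rename_i b c hsteps
      by_cases hb : b ∈ pdom π'
      · obtain ⟨a, ha, hc⟩ := hstep
        obtain ⟨a', ha'⟩ := Option.ne_none_iff_exists'.mp hb
        have : π b = some a' := hsub b a' ha'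
        have haa : a = a' := by rw [ha] at this; exact (Option.some.injEq _ _ ▸ this).symm ▸ rfl
        obtain ⟨u, hu, hu2⟩ := ih
        exact ⟨u, .head ⟨a', ha', haa ▸ hc⟩ hu, hu2⟩
      · exact ⟨b, .refl, hb⟩
  intro s hs
  have hsπ : s ∈ pdom π := by
    obtain ⟨a, ha⟩ := Option.ne_none_iff_exists'.mp hs
    simp [pdom, hsub s a ha]
  obtain ⟨t, htr, htf⟩ := hπ s hsπ
  obtain ⟨u, hu, hu2⟩ := key s t htr (fun h => htf.2 (by obtain ⟨a, ha⟩ := Option.ne_none_iff_exists'.mp h; simp [pdom, hsub t a ha]))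
  exact ⟨u, hu, Set.mem_iUnion₂.mpr ⟨s, hs, hu⟩, hu2⟩
end

section
/- (Concretizer soundness) If the greedy concretizer procedure, run on input sets D and F with D ∩ F = ∅, returns a policy π (not ⊥), then π is proper, domain(π) = D, and front(π) ⊆ F. -/
/-- `CRun app succs D F π` : the policy `π` can be produced by a sequence of steps of the
greedy concretizer on input `(D, F)`, starting from the empty policy.  Each step picks an
unmapped `s ∈ D` and an applicable action `a` with `succs s a ∩ (F ∪ D_handled) ≠ ∅` and
`succs s a ⊆ D ∪ F`. -/
inductive CRun {S A : Type*} [DecidableEq S] (app : S → A → Prop)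
    (succs : S → A → Set S) (D F : Set S) : (S → Option A) → Prop
  | nil : CRun app succs D F (fun _ => none)
  | step {π : S → Option A} {s : S} {a : A} :
      CRun app succs D F π → s ∈ D → π s = none → app s a →
      (succs s a ∩ (F ∪ pdom π)).Nonempty →
      succs s a ⊆ D ∪ F →
      CRun app succs D F (Function.update π s (some a))

section Policy

variable {S A : Type*} {succs : S → A → Set S} {π π' : S → Option A}

theorem reachFrom_mono (h : subpolicy π π') (s : S) :
    reachFrom succs π s ⊆ reachFrom succs π' s := fun _ ↦
  Relation.ReflTransGen.mono (p := pstep succs π') (fun _ _ ⟨a, ha, hv⟩ ↦ ⟨a, h _ a ha, hv⟩) _ _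

theorem reachFrom_subset_of_succs_subset {T : Set S} {s : S} (hs : s ∈ T)
    (hT : ∀ u a, π u = some a → succs u a ⊆ T) : reachFrom succs π s ⊆ T := by
  intro t hst
  induction hst with
  | refl => exact hs
  | tail _ hstep =>
    obtain ⟨a, ha, hw⟩ := hstep
    exact hT _ a ha hw

theorem front_subset_of_succs_subset {F : Set S}
    (hF : ∀ u a, π u = some a → succs u a ⊆ pdom π ∪ F) : front succs π ⊆ F := by
  rintro t ⟨htr, htπ⟩
  obtain ⟨s, hs, hst⟩ := Set.mem_iUnion₂.1 htr
  exact (reachFrom_subset_of_succs_subset (T := pdom π ∪ F) (Or.inl hs) hF hst).resolve_left htπ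

theorem proper_of_reachFrom_inter_nonempty {F : Set S} (hdisj : Disjoint (pdom π) F)
    (hreach : ∀ s ∈ pdom π, (reachFrom succs π s ∩ F).Nonempty) : proper succs π := by
  intro s hs
  obtain ⟨t, hst, htF⟩ := hreach s hs
  exact ⟨t, hst, Set.mem_biUnion hs hst, hdisj.notMem_of_mem_right htF⟩

variable [DecidableEq S] {s : S} {a : A}

theorem pdom_update_some : pdom (Function.update π s (some a)) = insert s (pdom π) := by
  ext u
  by_cases hu : u = s <;> simp [pdom, hu]

theorem subpolicy_update_some (hs : π s = none) : subpolicy π (Function.update π s (some a)) := by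
  intro u b hu
  rw [Function.update_of_ne]
  · exact hu
  · rintro rfl
    simp [hs] at hu

end Policy

namespace CRun

variable {S A : Type*} [DecidableEq S] {app : S → A → Prop} {succs : S → A → Set S}
  {D F : Set S} {π : S → Option A}

theorem succs_subset (hrun : CRun app succs D F π) :
    ∀ u a, π u = some a → succs u a ⊆ D ∪ F := by
  induction hrun with
  | nil => simp
  | @step π s a _ _ _ _ _ hsub ih =>
    intro u b hb
    by_cases hu : u = s
    · subst hu
      simp only [Function.update_self, Option.some.injEq] at hb
      exact hb ▸ hsub
    · rw [Function.update_of_ne hu] at hb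
      exact ih u b hb

theorem reachFrom_inter_nonempty (hrun : CRun app succs D F π) :
    ∀ s ∈ pdom π, (reachFrom succs π s ∩ F).Nonempty := by
  induction hrun with
  | nil => simp [pdom]
  | @step π s a _ _ hs _ hne _ ih =>
    have hlift := reachFrom_mono (succs := succs) (subpolicy_update_some (a := a) hs)
    intro u hu
    rw [pdom_update_some] at hu
    rcases hu with rfl | hu
    · obtain ⟨x, hxa, hx⟩ := hne
      have hux : pstep succs (Function.update π u (some a)) u x := ⟨a, by simp, hxa⟩
      rcases hx with hxF | hxπ
      · exact ⟨x, .single hux, hxF⟩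
      · obtain ⟨t, hxt, htF⟩ := ih x hxπ
        exact ⟨t, .head hux (hlift x hxt), htF⟩
    · obtain ⟨t, hut, htF⟩ := ih u hu
      exact ⟨t, hlift u hut, htF⟩

end CRun

/-- Concretizer soundness: if the concretizer terminates returning a policy `π`
(i.e. a run producing `π` has mapped all of `D`), then `π` is proper, has domain `D`,
and its frontier is contained in `F`. -/
theorem concretizer_sound {S A : Type*} [DecidableEq S] (app : S → A → Prop)
    (succs : S → A → Set S) (D F : Set S) (hDF : D ∩ F = ∅)
    (π : S → Option A) (hrun : CRun app succs D F π) (hdone : pdom π = D) :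
    proper succs π ∧ pdom π = D ∧ front succs π ⊆ F := by
  have hdisj : Disjoint (pdom π) F := hdone ▸ Set.disjoint_iff_inter_eq_empty.mpr hDF
  have hclosed : ∀ u a, π u = some a → succs u a ⊆ pdom π ∪ F := hdone ▸ hrun.succs_subset
  exact ⟨proper_of_reachFrom_inter_nonempty hdisj hrun.reachFrom_inter_nonempty, hdone,
    front_subset_of_succs_subset hclosed⟩
end

section
/- (Concretizer completeness / no false negatives) If there exists a proper policy π' with domain(π') = D and front(π') ⊆ F, then at any point during the concretizer's execution where D \ domain(π) ≠ ∅, there exist s ∈ D \ domain(π) and an action a applicable to s such that succs(s,a) ∩ (F ∪ domain(π)) ≠ ∅ and succs(s,a) ⊆ D ∪ F. Consequently, the concretizer never returns ⊥ on input (D,F). -/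
lemma cross_step {α : Type*} {r : α → α → Prop} {P : α → Prop} {x y : α}
    (h : Relation.ReflTransGen r x y) (hx : P x) :
    ¬ P y → ∃ u v, P u ∧ ¬ P v ∧ r u v := by
  induction h with
  | refl => intro hy; exact absurd hx hy
  | @tail b c hxb hbc ih =>
      intro hy
      by_cases hb : P b
      · exact ⟨b, c, hb, hy, hbc⟩
      · exact ih hb

lemma pdom_update {S A : Type*} [DecidableEq S] (π : S → Option A) (s : S) (a : A) :
    pdom (Function.update π s (some a)) = insert s (pdom π) := by
  ext t
  simp only [pdom, Set.mem_setOf_eq, Set.mem_insert_iff]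
  by_cases h : t = s
  · subst h; simp [Function.update_self]
  · simp [Function.update_of_ne h, h]

lemma crun_pdom_subset {S A : Type*} [DecidableEq S] {app : S → A → Prop}
    {succs : S → A → Set S} {D F : Set S} {π : S → Option A}
    (h : CRun app succs D F π) : pdom π ⊆ D := by
  induction h with
  | nil => intro t ht; exact absurd rfl ht
  | step _ hs _ _ _ _ ih =>
      rw [pdom_update]
      exact Set.insert_subset hs ih

/-- Concretizer completeness (no false negatives): if some proper policy `π'` with
`domain(π') = D` and `front(π') ⊆ F` exists, then at any point of the execution with
unmapped states remaining there is an available mapping, and consequently the concretizer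
can always run to completion (never returns ⊥). -/
theorem concretizer_complete {S A : Type*} [DecidableEq S] (app : S → A → Prop)
    (succs : S → A → Set S) (D F : Set S) (hDF : D ∩ F = ∅) (hDfin : D.Finite)
    (π' : S → Option A) (happ' : ∀ s a, π' s = some a → app s a)
    (hprop : proper succs π') (hdom : pdom π' = D) (hfr : front succs π' ⊆ F) :
    (∀ π : S → Option A, CRun app succs D F π → (D \ pdom π).Nonempty →
      ∃ s ∈ D \ pdom π, ∃ a, app s a ∧
        (succs s a ∩ (F ∪ pdom π)).Nonempty ∧ succs s a ⊆ D ∪ F) ∧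
    (∃ π : S → Option A, CRun app succs D F π ∧ pdom π = D) := by
  -- every successor of a domain state of π' is in D ∪ F
  have hsucc_sub : ∀ u a, π' u = some a → succs u a ⊆ D ∪ F := by
    intro u a hua w hw
    have hu : u ∈ pdom π' := by simp [pdom, hua]
    have hreach : w ∈ reachAll succs π' := by
      refine Set.mem_biUnion hu ?_
      exact Relation.ReflTransGen.single ⟨a, hua, hw⟩
    by_cases hwD : w ∈ pdom π'
    · exact Or.inl (hdom ▸ hwD)
    · exact Or.inr (hfr ⟨hreach, hwD⟩)
  have part1 : ∀ π : S → Option A, CRun app succs D F π → (D \ pdom π).Nonempty →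
      ∃ s ∈ D \ pdom π, ∃ a, app s a ∧
        (succs s a ∩ (F ∪ pdom π)).Nonempty ∧ succs s a ⊆ D ∪ F := by
    intro π _ ⟨s₀, hs₀⟩
    have hs₀' : s₀ ∈ pdom π' := hdom ▸ hs₀.1
    obtain ⟨t, htr, htf⟩ := hprop s₀ hs₀'
    have htF : t ∈ F := hfr htf
    have htnot : t ∉ D \ pdom π := by
      intro ht
      exact absurd (Set.mem_inter ht.1 htF) (by rw [hDF]; exact Set.notMem_empty t)
    obtain ⟨u, v, hu, hv, a, hua, hvsucc⟩ := cross_step htr hs₀ htnot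
    refine ⟨u, hu, a, happ' u a hua, ⟨v, hvsucc, ?_⟩, hsucc_sub u a hua⟩
    have hvDF : v ∈ D ∪ F := hsucc_sub u a hua hvsucc
    rcases hvDF with hvD | hvF
    · right
      by_contra hvp
      exact hv ⟨hvD, hvp⟩
    · exact Or.inl hvF
  refine ⟨part1, ?_⟩
  -- build a complete run by induction on the number of unmapped states
  have key : ∀ n (π : S → Option A), CRun app succs D F π → (D \ pdom π).ncard ≤ n →
      ∃ π₂, CRun app succs D F π₂ ∧ pdom π₂ = D := by
    intro n
    induction n with
    | zero =>
        intro π hrun hcard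
        have hfin : (D \ pdom π).Finite := hDfin.subset Set.diff_subset
        have hempty : D \ pdom π = ∅ := by
          by_contra hne
          have := (Set.ncard_pos hfin).2 (Set.nonempty_iff_ne_empty.2 hne)
          omega
        refine ⟨π, hrun, Set.Subset.antisymm (crun_pdom_subset hrun) ?_⟩
        intro t ht
        by_contra htp
        exact absurd (Set.eq_empty_iff_forall_notMem.1 hempty t) (by simp [ht, htp])
    | succ n ih =>
        intro π hrun hcard
        by_cases hne : (D \ pdom π).Nonempty
        · obtain ⟨s, hs, a, happ, hint, hsub⟩ := part1 π hrun hne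
          have hπs : π s = none := by
            by_contra h
            exact hs.2 h
          have hrun' := CRun.step hrun hs.1 hπs happ hint hsub
          refine ih _ hrun' ?_
          have hfin : (D \ pdom π).Finite := hDfin.subset Set.diff_subset
          have hdiff : D \ pdom (Function.update π s (some a)) = (D \ pdom π) \ {s} := by
            rw [pdom_update]
            ext t
            simp only [Set.mem_diff, Set.mem_insert_iff, Set.mem_singleton_iff]
            tauto
          rw [hdiff]
          have := Set.ncard_diff_singleton_lt_of_mem hs hfin
          omega
        · exact ih π hrun (by
            rw [Set.not_nonempty_iff_eq_empty.1 hne]; simp)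
  exact key (D \ pdom (fun _ => none)).ncard _ CRun.nil le_rfl
end

section
/- (Symmetries map solutions to solutions) Let σ be a structural symmetry of a FOND task that additionally fixes the initial state (σ(s₀) = s₀). If π is a solution policy, then the policy σ(π) defined by σ(π)[σ(s)] = σ(π[s]) for s ∈ domain(π) is also a solution policy, with domain(σ(π)) = {σ(s) : s ∈ domain(π)} and front(σ(π)) = {σ(s) : s ∈ front(π)}. -/
/-!
A symmetry `σ = (σS, σA)` is an automorphism of the transition system, and `σ(π)` is `π`
transported along it. Transport sends `π`-steps exactly to `σ(π)`-steps, hence `π`-trajectories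
to `σ(π)`-trajectories, so the domain, reachable set, frontier and escape sets of `σ(π)` are the
`σ`-images of those of `π`. Goal-closedness and properness only involve these sets and the goal
states, which `σ` preserves, and `s₀` stays covered because `σ` fixes it.
-/

theorem Relation.reflTransGen_equiv_iff {α β : Type*} {r : α → α → Prop} {p : β → β → Prop}
    (e : α ≃ β) (h : ∀ a b, p (e a) (e b) ↔ r a b) {a b : α} :
    Relation.ReflTransGen p (e a) (e b) ↔ Relation.ReflTransGen r a b := by
  refine ⟨fun hp => ?_, Relation.ReflTransGen.lift e (fun x y => (h x y).2) a b⟩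
  simpa [Function.onFun] using
    Relation.ReflTransGen.lift e.symm (fun x y hxy => (h _ _).1 (by simpa using hxy)) _ _ hp

section mapPolicy

variable {S T A B : Type*} (e : S ≃ T) (f : A ≃ B) (π : S → Option A)

def mapPolicy : T → Option B := fun t => Option.map f (π (e.symm t))

@[simp]
theorem mapPolicy_apply_equiv (s : S) : mapPolicy e f π (e s) = Option.map f (π s) := by
  simp [mapPolicy]

theorem pdom_mapPolicy : pdom (mapPolicy e f π) = e '' pdom π := by
  ext t
  obtain ⟨s, rfl⟩ := e.surjective t
  simp [pdom]

theorem mapPolicy_applicable {app : S → A → Prop} {app' : T → B → Prop}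
    (happ : ∀ s a, app' (e s) (f a) ↔ app s a) (hπ : ∀ s a, π s = some a → app s a) :
    ∀ t b, mapPolicy e f π t = some b → app' t b := by
  intro t b hb
  obtain ⟨s, rfl⟩ := e.surjective t
  obtain ⟨a, ha, rfl⟩ := Option.map_eq_some_iff.1 ((mapPolicy_apply_equiv e f π s).symm.trans hb)
  exact (happ s a).2 (hπ s a ha)

variable {succs : S → A → Set S} {succs' : T → B → Set T}
  (hsuccs : ∀ s a, succs' (e s) (f a) = e '' succs s a)
include hsuccs

theorem pstep_mapPolicy_iff (s t : S) :
    pstep succs' (mapPolicy e f π) (e s) (e t) ↔ pstep succs π s t := by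
  simp [pstep, hsuccs]

theorem reachFrom_mapPolicy (s : S) :
    reachFrom succs' (mapPolicy e f π) (e s) = e '' reachFrom succs π s := by
  ext t
  obtain ⟨t, rfl⟩ := e.surjective t
  simp only [reachFrom, Set.mem_ofPred_eq, e.injective.mem_set_image]
  exact Relation.reflTransGen_equiv_iff e (pstep_mapPolicy_iff e f π hsuccs)

theorem reachAll_mapPolicy :
    reachAll succs' (mapPolicy e f π) = e '' reachAll succs π := by
  simp only [reachAll, pdom_mapPolicy, Set.biUnion_image, reachFrom_mapPolicy e f π hsuccs,
    Set.image_iUnion₂]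

theorem front_mapPolicy : front succs' (mapPolicy e f π) = e '' front succs π := by
  rw [front, front, reachAll_mapPolicy e f π hsuccs, pdom_mapPolicy, Set.image_sdiff e.injective]

theorem escape_mapPolicy (s : S) :
    escape succs' (mapPolicy e f π) (e s) = e '' escape succs π s := by
  rw [escape, escape, reachFrom_mapPolicy e f π hsuccs, front_mapPolicy e f π hsuccs,
    Set.image_inter e.injective]

theorem proper_mapPolicy (h : proper succs π) : proper succs' (mapPolicy e f π) := by
  rw [proper, pdom_mapPolicy, Set.forall_mem_image]
  intro s hs
  rw [escape_mapPolicy e f π hsuccs]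
  exact (h s hs).image e

theorem goalClosed_mapPolicy {Sg : Set S} {Sg' : Set T} (hgoal : ∀ s, e s ∈ Sg' ↔ s ∈ Sg)
    (h : goalClosed succs Sg π) : goalClosed succs' Sg' (mapPolicy e f π) := by
  rw [goalClosed, front_mapPolicy e f π hsuccs, Set.image_subset_iff]
  exact fun s hs => (hgoal s).2 (h hs)

theorem isSolution_mapPolicy {Sg : Set S} {Sg' : Set T} (hgoal : ∀ s, e s ∈ Sg' ↔ s ∈ Sg)
    {s0 : S} (h : isSolution succs Sg s0 π) :
    isSolution succs' Sg' (e s0) (mapPolicy e f π) := by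
  obtain ⟨hclosed, hproper, hs0⟩ := h
  refine ⟨goalClosed_mapPolicy e f π hsuccs hgoal hclosed, proper_mapPolicy e f π hsuccs hproper, ?_⟩
  rw [pdom_mapPolicy]
  exact hs0.imp (hgoal s0).2 (Set.mem_image_of_mem e)

end mapPolicy

/-- Symmetries map solutions to solutions: if `σ = (σS, σA)` preserves goal states,
applicability, and successor structure, and fixes the initial state, then the image
`σ(π)` (defined by `σ(π)[σ(s)] = σ(π[s])`) of a solution policy `π` is again a solution,
with domain and frontier the `σ`-images of those of `π`. -/
theorem symmetry_maps_solution_to_solution {S A : Type*}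
    (succs : S → A → Set S) (app : S → A → Prop) (Sg : Set S) (s0 : S)
    (σS : Equiv.Perm S) (σA : Equiv.Perm A)
    (hgoal : ∀ s, σS s ∈ Sg ↔ s ∈ Sg)
    (happ : ∀ s a, app (σS s) (σA a) ↔ app s a)
    (hsuccs : ∀ s a, succs (σS s) (σA a) = σS '' succs s a)
    (hinit : σS s0 = s0)
    (π : S → Option A) (hπapp : ∀ s a, π s = some a → app s a)
    (hπ : isSolution succs Sg s0 π) :
    (∀ s a, (Option.map σA (π (σS.symm s))) = some a → app s a) ∧
    isSolution succs Sg s0 (fun s => Option.map σA (π (σS.symm s))) ∧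
    pdom (fun s => Option.map σA (π (σS.symm s))) = σS '' pdom π ∧
    front succs (fun s => Option.map σA (π (σS.symm s))) = σS '' front succs π := by
  refine ⟨mapPolicy_applicable σS σA π happ hπapp, ?_, pdom_mapPolicy σS σA π,
    front_mapPolicy σS σA π hsuccs⟩
  have h := isSolution_mapPolicy σS σA π hsuccs hgoal hπ
  rwa [hinit] at h
end

section
/- (Decompression of a compressed policy) Let π be a policy over states and τ a partial policy over partial states produced to satisfy: for every s ∈ domain(π), there exists p ∈ domain(τ) with s ⊨ p and τ[p] = π[s], and there is no p ∈ domain(τ) with s ⊨ p and τ[p] ≠ π[s]; and for every s ∈ front(π), no p ∈ domain(τ) has s ⊨ p. Then slice(decompress(τ), reach(π)) = π and reach(π) ∩ buggy(τ) = ∅. -/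
/-- A state `s : F → Bool` holds a partial state `p : F → Option Bool` iff it agrees with
`p` wherever `p` is defined. -/
def pmodels {F : Type*} (s : F → Bool) (p : F → Option Bool) : Prop :=
  ∀ f b, p f = some b → s f = b

/-- `τ[s]` : the set of actions prescribed for `s` by partial states of `τ` that `s` holds. -/
def tauActs {F A : Type*} (τ : (F → Option Bool) → Option A) (s : F → Bool) : Set A :=
  {a | ∃ p, τ p = some a ∧ pmodels s p}

open Classical in
/-- `decompress(τ)` maps `s` to `a` iff `τ[s] = {a}` is a singleton. -/
noncomputable def decompress {F A : Type*} (τ : (F → Option Bool) → Option A)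
    (s : F → Bool) : Option A :=
  if h : ∃ a, tauActs τ s = {a} then some h.choose else none

/-- `buggy(τ)` : states covered by partial states of `τ` prescribing at least two actions. -/
def buggy {F A : Type*} (τ : (F → Option Bool) → Option A) : Set (F → Bool) :=
  {s | ∃ a b, a ≠ b ∧ a ∈ tauActs τ s ∧ b ∈ tauActs τ s}

open Classical in
/-- Decompression of a compressed policy: if for every `s ∈ domain(π)` some partial state
of `τ` held by `s` is mapped to `π[s]` and none is mapped to a different action, and no
partial state of `τ` is held by any frontier state of `π`, then
`slice(decompress(τ), reach(π)) = π` and `reach(π) ∩ buggy(τ) = ∅`. -/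
theorem decompress_compressed {F A : Type*}
    (succs : (F → Bool) → A → Set (F → Bool))
    (π : (F → Bool) → Option A) (τ : (F → Option Bool) → Option A)
    (h1 : ∀ s a, π s = some a →
      (∃ p, τ p = some a ∧ pmodels s p) ∧
      (∀ p b, τ p = some b → pmodels s p → b = a))
    (h2 : ∀ s ∈ front succs π, ∀ p a, τ p = some a → ¬ pmodels s p) :
    (fun s => if s ∈ reachAll succs π then decompress τ s else none) = π ∧
    reachAll succs π ∩ buggy τ = ∅ := by
  -- key fact: for reachable s, tauActs τ s is {a} if π s = some a, ∅ if π s = none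
  have hdom : ∀ s a, π s = some a → tauActs τ s = {a} := by
    intro s a hsa
    obtain ⟨⟨p, hp, hm⟩, huniq⟩ := h1 s a hsa
    ext b
    constructor
    · rintro ⟨q, hq, hmq⟩; exact huniq q b hq hmq
    · rintro rfl; exact ⟨p, hp, hm⟩
  have hfr : ∀ s ∈ reachAll succs π, π s = none → tauActs τ s = ∅ := by
    intro s hs hnone
    ext b
    simp only [Set.mem_empty_iff_false, iff_false]
    rintro ⟨p, hp, hm⟩
    exact h2 s ⟨hs, by simp [pdom, hnone]⟩ p b hp hm
  constructor
  · funext s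
    by_cases hr : s ∈ reachAll succs π
    · simp only [hr, if_true]
      cases hcs : π s with
      | none =>
          have he := hfr s hr hcs
          unfold decompress
          rw [dif_neg]
          rintro ⟨a, ha⟩
          rw [he] at ha
          exact (Set.singleton_ne_empty a) ha.symm
      | some a =>
          have he := hdom s a hcs
          unfold decompress
          have hex : ∃ b, tauActs τ s = {b} := ⟨a, he⟩
          rw [dif_pos hex]
          have h3 := hex.choose_spec
          exact congrArg some (Set.singleton_eq_singleton_iff.mp (h3.symm.trans he))
    · simp only [hr, if_false]
      cases hcs : π s with
      | none => rfl
      | some a =>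
          exfalso
          exact hr (Set.mem_biUnion (show s ∈ pdom π by simp [pdom, hcs])
            Relation.ReflTransGen.refl)
  · ext s
    simp only [Set.mem_inter_iff, Set.mem_empty_iff_false, iff_false, not_and]
    rintro hr ⟨a, b, hab, ha, hb⟩
    cases hcs : π s with
    | none =>
        have := hfr s hr hcs
        rw [this] at ha; exact ha
    | some c =>
        have := hdom s c hcs
        rw [this] at ha hb
        exact hab (ha.trans hb.symm)
end
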